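/- If r ≡ 3 (mod 4) and 3 does not divide r, then for all k ≥ 0 and all j ≥ 1, F_{k+r(j+1)} + F_{k+rj} ≡ F_{k+r(j-1)} (mod 10) (reverse quasi-Fibonacci property). -/
import Mathlib

private lemma fib_shift60 : ∀ n : ℕ, Nat.fib (n + 60) % 10 = Nat.fib n % 10 ∧
    Nat.fib (n + 61) % 10 = Nat.fib (n + 1) % 10 := by
  intro n
  induction n with
  | zero => decide
  | succ m ih =>
    refine ⟨ih.2, ?_⟩
    have hA : Nat.fib (m + 60 + 2) = Nat.fib (m + 60) + Nat.fib (m + 60 + 1) :=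
      Nat.fib_add_two
    have hB : Nat.fib (m + 2) = Nat.fib m + Nat.fib (m + 1) := Nat.fib_add_two
    rw [show m + 1 + 61 = m + 60 + 2 by omega, show m + 1 + 1 = m + 2 by omega, hA, hB,
        show m + 60 + 1 = m + 61 by omega]
    have h1 := ih.1
    have h2 := ih.2
    omega

private lemma fib_mod60 : ∀ n : ℕ, Nat.fib n % 10 = Nat.fib (n % 60) % 10 := by
  intro n
  induction n using Nat.strong_induction_on with
  | _ n ih =>
    by_cases h : n < 60
    · rw [Nat.mod_eq_of_lt h]
    · obtain ⟨m, rfl⟩ : ∃ m, n = m + 60 := ⟨n - 60, by omega⟩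
      rw [(fib_shift60 m).1, ih m (by omega), show (m + 60) % 60 = m % 60 from
        Nat.add_mod_right m 60]

theorem reverse_quasi_fibonacci (r : ℕ) (h4 : r % 4 = 3) (h3 : ¬ (3 ∣ r)) :
    ∀ k : ℕ, ∀ j : ℕ, 1 ≤ j →
      Nat.fib (k + r * (j + 1)) + Nat.fib (k + r * j) ≡ Nat.fib (k + r * (j - 1)) [MOD 10] := by
  have base : (Nat.fib (2 * r) + Nat.fib r) % 10 = 0 ∧
      (Nat.fib (2 * r + 1) + Nat.fib (r + 1)) % 10 = 1 := by
    have hc : r % 60 = 7 ∨ r % 60 = 11 ∨ r % 60 = 19 ∨ r % 60 = 23 ∨ r % 60 = 31 ∨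
        r % 60 = 35 ∨ r % 60 = 43 ∨ r % 60 = 47 ∨ r % 60 = 55 ∨ r % 60 = 59 := by omega
    rw [Nat.add_mod (Nat.fib (2*r)), Nat.add_mod (Nat.fib (2*r+1)),
        fib_mod60 (2*r), fib_mod60 r, fib_mod60 (2*r+1), fib_mod60 (r+1)]
    rcases hc with h|h|h|h|h|h|h|h|h|h <;>
      rw [show (2*r) % 60 = (2 * (r % 60)) % 60 by omega,
          show (2*r+1) % 60 = (2 * (r % 60) + 1) % 60 by omega,
          show (r+1) % 60 = (r % 60 + 1) % 60 by omega, h] <;> decide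
  have main : ∀ n : ℕ, (Nat.fib (n + 2 * r) + Nat.fib (n + r)) % 10 = Nat.fib n % 10 ∧
      (Nat.fib (n + 1 + 2 * r) + Nat.fib (n + 1 + r)) % 10 = Nat.fib (n + 1) % 10 := by
    intro n
    induction n with
    | zero =>
      constructor
      · simpa using base.1
      · rw [show 0 + 1 + 2 * r = 2 * r + 1 by omega, show 0 + 1 + r = r + 1 by omega]
        simpa using base.2
    | succ m ih =>
      refine ⟨ih.2, ?_⟩
      have hA : Nat.fib (m + 2 * r + 2) = Nat.fib (m + 2 * r) + Nat.fib (m + 2 * r + 1) :=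
        Nat.fib_add_two
      have hB : Nat.fib (m + r + 2) = Nat.fib (m + r) + Nat.fib (m + r + 1) :=
        Nat.fib_add_two
      have hC : Nat.fib (m + 2) = Nat.fib m + Nat.fib (m + 1) := Nat.fib_add_two
      rw [show m + 1 + 1 + 2 * r = m + 2 * r + 2 by omega,
          show m + 1 + 1 + r = m + r + 2 by omega, show m + 1 + 1 = m + 2 by omega,
          hA, hB, hC, show m + 2 * r + 1 = m + 1 + 2 * r by omega,
          show m + r + 1 = m + 1 + r by omega]
      have h1 := ih.1
      have h2 := ih.2
      omega
  intro k j hj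
  obtain ⟨i, rfl⟩ : ∃ i, j = i + 1 := ⟨j - 1, by omega⟩
  have e1 : k + r * (i + 1 + 1) = (k + r * i) + 2 * r := by ring
  have e2 : k + r * (i + 1) = (k + r * i) + r := by ring
  have e3 : k + r * (i + 1 - 1) = k + r * i := by simp
  rw [e1, e2, e3]
  exact (main (k + r * i)).1
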